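/- Let ν be the Bernoulli (1/2, 1/2) product measure on Σ₂ = {0,1}^ℕ, i.e. the infinite product of the uniform measure on {0,1}. Then for ν-almost every sequence (x_k), lim_{n→∞} (1/n)·Σ_{k=1}^n x_k x_{2k} = 1/4; consequently ν(A_{1/4}) = 1 and dim_H(A_{1/4}) = 1. -/

import Mathlib

open Filter MeasureTheory Real Set

noncomputable section

/-- `Σ₂ = {0,1}^ℕ`: the space of 0-1 sequences `(x_k)_{k ≥ 1}`, where the entry `x_k`
(for `k ≥ 1`) is represented by `x (k-1) : Bool`. -/
abbrev Sigma2 : Type := ℕ → Bool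

/-- The metric `ρ((x_k),(y_k)) = 2^{-min{n : x_n ≠ y_n}}` (up to the indexing convention
`dist x y = (1/2)^{first index where x,y differ}`). -/
noncomputable instance : MetricSpace Sigma2 :=
  PiNat.metricSpaceOfDiscreteUniformity fun _ => rfl

/-- The digit `x_k ∈ {0,1}` (for `k ≥ 1`) of a sequence, as a real number. -/
def xval (x : Sigma2) (k : ℕ) : ℝ := if x (k - 1) then 1 else 0

/-- `A_θ = {(x_k) ∈ Σ₂ : lim_{n→∞} (1/n) ∑_{k=1}^n x_k x_{2k} = θ}`. -/
def Aset (θ : ℝ) : Set Sigma2 :=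
  {x | Tendsto (fun n : ℕ => (∑ k ∈ Finset.Icc 1 n, xval x k * xval x (2 * k)) / (n : ℝ))
    atTop (nhds θ)}

/-- The cylinder set `[u]` of sequences starting with the finite word `u`
(a list `u` represents the word `u_1 … u_n` with `u_k = u.getD (k-1) false`). -/
def cylinder (u : List Bool) : Set Sigma2 :=
  {x | ∀ i < u.length, x i = u.getD i false}

/-- Initial distribution: `π(0) = 1 - p`, `π(1) = p`. -/
def initProb (p : ℝ) (b : Bool) : ℝ := if b then p else 1 - p

/-- Transition probabilities: `P(0,0) = 1-p`, `P(0,1) = p`, `P(1,0) = q`, `P(1,1) = 1-q`. -/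
def transProb (p q : ℝ) (a b : Bool) : ℝ :=
  if a then (if b then 1 - q else q) else (if b then p else 1 - p)

/-- Markov weight `μ[w] = π(w_1) ∏_{j=1}^{m-1} P(w_j, w_{j+1})` of a finite word `w`. -/
def mweight (p q : ℝ) (w : List Bool) : ℝ :=
  if w = [] then 1
  else initProb p (w.getD 0 false) *
    ∏ j ∈ Finset.range (w.length - 1), transProb p q (w.getD j false) (w.getD (j + 1) false)

/-- The subword `u|_{J(i)} = (u_i, u_{2i}, u_{4i}, …)` of a finite word `u` along the
geometric progression `J(i) = {2^r i : r ≥ 0}`, keeping the indices `2^r i ≤ |u|`. -/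
def subword (u : List Bool) (i : ℕ) : List Bool :=
  ((List.range (u.length + 1)).filter (fun r => 2 ^ r * i ≤ u.length)).map
    (fun r => u.getD (2 ^ r * i - 1) false)

/-- `ℙ_μ[u] = ∏_{i ≤ n, i odd} μ[u|_{J(i)}]` for a finite word `u` of length `n`. -/
def PmuWord (p q : ℝ) (u : List Bool) : ℝ :=
  ∏ i ∈ (Finset.Icc 1 u.length).filter (fun i => Odd i), mweight p q (subword u i)

/-- `Pm` is the (probability) measure `ℙ_μ` on `Σ₂` determined by its values
`ℙ_μ[u] = ∏_{i odd} μ[u|_{J(i)}]` on cylinder sets. -/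
def IsPmu (p q : ℝ) (Pm : Measure Sigma2) : Prop :=
  IsProbabilityMeasure Pm ∧
    ∀ u : List Bool, Pm (cylinder u) = ENNReal.ofReal (PmuWord p q u)

/-- The initial word `x_1^n = x_1 … x_n` of a sequence. -/
def word (x : Sigma2) (n : ℕ) : List Bool := (List.range n).map x

/-- `N_1(x_m^n) = #{k ∈ [m,n] : x_k = 1}`. -/
def N1 (x : Sigma2) (m n : ℕ) : ℕ :=
  ((Finset.Icc m n).filter (fun k => x (k - 1) = true)).card

/-- `N_{ij}(x_1^m) = #{k ≤ m : x_k = i, x_{2k} = j}` (digits `i, j` as booleans). -/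
def Nij (x : Sigma2) (i j : Bool) (m : ℕ) : ℕ :=
  ((Finset.Icc 1 m).filter (fun k => x (k - 1) = i ∧ x (2 * k - 1) = j)).card

/-- `N_{1,odd}(x_1^n) = #{k ≤ n : k odd, x_k = 1}`. -/
def N1odd (x : Sigma2) (n : ℕ) : ℕ :=
  ((Finset.Icc 1 n).filter (fun k => Odd k ∧ x (k - 1) = true)).card

/-- The binary entropy function `H(t) = -t log₂ t - (1-t) log₂ (1-t)`. -/
def Hent (t : ℝ) : ℝ := -(t * Real.logb 2 t) - (1 - t) * Real.logb 2 (1 - t)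

/-!
Write `Y_k = x_k x_{2k}` and `S_n = Y_1 + ⋯ + Y_n`. Under `ν` each `Y_k` is the indicator
that two given digits equal `1`, so `E Y_k = 1/4`, and `Y_k`, `Y_j` depend on four distinct
digits, hence are independent, unless `j ∈ {k, 2k, k/2}`. Thus `Var S_n ≤ 3n`, the second
moments of `S_{m²}/m² - 1/4` are summable and `S_{m²}/m² → 1/4` almost surely; as `S_n` is
nondecreasing and `(m+1)²/m² → 1`, this extends to the whole sequence.

The `2ⁿ` cylinders of length `n` cover `Σ₂` with diameter `2⁻ⁿ`, so `dim_H Σ₂ ≤ 1`.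
Conversely `ν s ≤ 2 diam s`, so by the mass distribution principle every set of positive
`ν`-measure has dimension at least `1`.
-/

open scoped ENNReal NNReal Topology
open ProbabilityTheory

theorem ae_tendsto_zero_of_summable_integral_sq {α : Type*} [MeasurableSpace α] {μ : Measure α}
    {f : ℕ → α → ℝ} (hint : ∀ n, Integrable (fun x => f n x ^ 2) μ)
    (hsum : Summable fun n => ∫ x, f n x ^ 2 ∂μ) :
    ∀ᵐ x ∂μ, Tendsto (fun n => f n x) atTop (𝓝 0) := by
  have hmeas : ∀ n, AEMeasurable (fun x => ENNReal.ofReal (f n x ^ 2)) μ :=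
    fun n => (hint n).aemeasurable.ennreal_ofReal
  have hfin : ∫⁻ x, ∑' n, ENNReal.ofReal (f n x ^ 2) ∂μ ≠ ∞ := by
    rw [lintegral_tsum hmeas]
    simp_rw [← ofReal_integral_eq_lintegral_ofReal (hint _) (ae_of_all _ fun _ => sq_nonneg _)]
    rw [← ENNReal.ofReal_tsum_of_nonneg (fun n => integral_nonneg fun _ => sq_nonneg _) hsum]
    exact ENNReal.ofReal_ne_top
  filter_upwards [ae_lt_top' (AEMeasurable.tsum hmeas) hfin] with x hx
  have hsq : Summable fun n => f n x ^ 2 := by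
    simpa [ENNReal.toReal_ofReal (sq_nonneg _)] using ENNReal.summable_toReal hx.ne
  have habs : Tendsto (fun n => |f n x|) atTop (𝓝 0) := by
    simpa [Real.sqrt_sq_eq_abs] using hsq.tendsto_atTop_zero.sqrt
  exact tendsto_zero_iff_abs_tendsto_zero _ |>.mpr habs

theorem tendsto_div_of_monotone_of_tendsto_div_sq {u : ℕ → ℝ} {l : ℝ} (hu : Monotone u)
    (h : Tendsto (fun m => u (m ^ 2) / (m ^ 2 : ℕ)) atTop (𝓝 l)) :
    Tendsto (fun n => u n / n) atTop (𝓝 l) := by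
  refine tendsto_div_of_monotone_of_exists_subseq_tendsto_div u l hu fun a ha => ⟨(· ^ 2), ?_,
    tendsto_pow_atTop two_ne_zero, h⟩
  have hratio : Tendsto (fun m : ℕ => (1 + 1 / (m : ℝ)) ^ 2) atTop (𝓝 1) := by
    simpa using ((tendsto_one_div_atTop_nhds_zero_nat).const_add (1 : ℝ)).pow 2
  filter_upwards [hratio.eventually (gt_mem_nhds ha), eventually_gt_atTop 0] with m hm hm0
  calc (((m + 1) ^ 2 : ℕ) : ℝ) = (1 + 1 / (m : ℝ)) ^ 2 * ((m ^ 2 : ℕ) : ℝ) := by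
        push_cast; field_simp
    _ ≤ a * ((m ^ 2 : ℕ) : ℝ) := by gcongr

instance : BorelSpace Sigma2 := Pi.borelSpace

namespace Sigma2

def uniformBool : Measure Bool := (2 : ℝ≥0∞)⁻¹ • Measure.count

lemma uniformBool_singleton (b : Bool) : uniformBool {b} = 2⁻¹ := by
  simp [uniformBool]

lemma uniformBool_univ : uniformBool univ = 1 := by
  rw [uniformBool, Measure.smul_apply, Measure.count_univ]
  simp [ENNReal.inv_mul_cancel]

instance : IsProbabilityMeasure uniformBool := ⟨uniformBool_univ⟩

lemma preimage_restrict_singleton {n : ℕ} (v : Fin n → Bool) :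
    (fun (x : Sigma2) (i : Fin n) => x i) ⁻¹' {v} = _root_.cylinder (List.ofFn v) := by
  ext x
  simp only [mem_preimage, mem_singleton_iff, funext_iff, _root_.cylinder, mem_ofPred_eq,
    List.length_ofFn]
  refine ⟨fun h i hi => ?_, fun h i => ?_⟩
  · rw [List.getD_eq_getElem _ _ (by simpa using hi), List.getElem_ofFn]
    exact h ⟨i, hi⟩
  · have hi := h i i.isLt
    rwa [List.getD_eq_getElem _ _ (by simp), List.getElem_ofFn] at hi

def allTrue (s : Finset ℕ) : Set Sigma2 := {x | ∀ i ∈ s, x i = true}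

lemma measurableSet_allTrue (s : Finset ℕ) : MeasurableSet (allTrue s) := by
  have : allTrue s = ⋂ i ∈ s, (fun x : Sigma2 => x i) ⁻¹' {true} := by ext; simp [allTrue]
  rw [this]
  exact .biInter s.countable_toSet fun i _ => measurable_pi_apply i (measurableSet_singleton _)

lemma allTrue_union (s t : Finset ℕ) : allTrue (s ∪ t) = allTrue s ∩ allTrue t := by
  ext; simp [allTrue, or_imp, forall_and]

/-- The positions of the digits `x_k` and `x_{2k}`, which `Sigma2` stores at indices `k - 1` and
`2k - 1`. -/
def digitPair (k : ℕ) : Finset ℕ := {k - 1, 2 * k - 1}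

lemma card_digitPair {k : ℕ} (hk : 1 ≤ k) : (digitPair k).card = 2 := by
  rw [digitPair, Finset.card_pair (by omega)]

lemma card_digitPair_union {k j : ℕ} (hk : 1 ≤ k) (hj : 1 ≤ j)
    (hdisj : ¬(j = k ∨ j = 2 * k ∨ k = 2 * j)) : (digitPair k ∪ digitPair j).card = 4 := by
  have : digitPair k ∪ digitPair j = {k - 1, 2 * k - 1, j - 1, 2 * j - 1} := by
    ext
    simp only [digitPair, Finset.mem_union, Finset.mem_insert, Finset.mem_singleton]
    tauto
  rw [this, Finset.card_insert_of_notMem, Finset.card_insert_of_notMem, Finset.card_pair] <;>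
    simp <;> omega

lemma card_filter_overlapping_le (k n : ℕ) :
    ((Finset.Icc 1 n).filter fun j => j = k ∨ j = 2 * k ∨ k = 2 * j).card ≤ 3 := by
  refine (Finset.card_le_card (t := {k, 2 * k, k / 2}) fun j hj => ?_).trans Finset.card_le_three
  simp only [Finset.mem_filter] at hj
  simp only [Finset.mem_insert, Finset.mem_singleton]
  omega

lemma xval_mul_xval_two_mul (x : Sigma2) (k : ℕ) :
    xval x k * xval x (2 * k) = (allTrue (digitPair k)).indicator 1 x := by
  by_cases h1 : x (k - 1) <;> by_cases h2 : x (2 * k - 1) <;>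
    simp [xval, allTrue, digitPair, indicator, h1, h2]

def corrSum (n : ℕ) (x : Sigma2) : ℝ := ∑ k ∈ Finset.Icc 1 n, xval x k * xval x (2 * k)

lemma corrSum_eq_sum_indicator (n : ℕ) :
    corrSum n = ∑ k ∈ Finset.Icc 1 n, (allTrue (digitPair k)).indicator 1 := by
  ext x
  simp only [corrSum, Finset.sum_apply, xval_mul_xval_two_mul]

lemma xval_nonneg (x : Sigma2) (k : ℕ) : 0 ≤ xval x k := by
  unfold xval; split <;> norm_num

lemma xval_le_one (x : Sigma2) (k : ℕ) : xval x k ≤ 1 := by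
  unfold xval; split <;> norm_num

lemma monotone_corrSum (x : Sigma2) : Monotone fun n => corrSum n x :=
  fun _ _ hmn => Finset.sum_le_sum_of_subset_of_nonneg (Finset.Icc_subset_Icc_right hmn)
    fun k _ _ => mul_nonneg (xval_nonneg x k) (xval_nonneg x (2 * k))

lemma abs_corrSum_le (n : ℕ) (x : Sigma2) : |corrSum n x| ≤ n := by
  rw [corrSum, abs_of_nonneg
    (Finset.sum_nonneg fun k _ => mul_nonneg (xval_nonneg x _) (xval_nonneg x _))]
  refine (Finset.sum_le_card_nsmul _ _ 1 fun k _ => ?_).trans (by simp)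
  exact mul_le_one₀ (xval_le_one x _) (xval_nonneg x _) (xval_le_one x _)

lemma measurable_corrSum (n : ℕ) : Measurable (corrSum n) := by
  rw [corrSum_eq_sum_indicator]
  refine Finset.sum_induction _ Measurable (fun _ _ => Measurable.add) measurable_const
    fun k _ => measurable_const.indicator (measurableSet_allTrue _)

lemma memLp_corrSum {ν : Measure Sigma2} [IsFiniteMeasure ν] (n : ℕ) : MemLp (corrSum n) 2 ν :=
  .of_bound (measurable_corrSum n).aestronglyMeasurable n (ae_of_all _ (abs_corrSum_le n))

lemma mem_cylinder_iff_edist_le {x y : Sigma2} {n : ℕ} :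
    y ∈ PiNat.cylinder x n ↔ edist y x ≤ 2⁻¹ ^ n := by
  rw [PiNat.mem_cylinder_iff_dist_le, edist_dist, ← ENNReal.ofReal_le_ofReal_iff (by positivity),
    ENNReal.ofReal_pow (by norm_num), one_div, ENNReal.ofReal_inv_of_pos two_pos]
  simp

lemma dimH_univ_le_one : dimH (univ : Set Sigma2) ≤ 1 := by
  let t : ∀ n : ℕ, (Fin n → Bool) → Set Sigma2 := fun n v => {x | ∀ i : Fin n, x i = v i}
  have hdiam : ∀ n v, Metric.ediam (t n v) ≤ 2⁻¹ ^ n := fun n v =>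
    Metric.ediam_le fun y hy w hw => mem_cylinder_iff_edist_le.mp fun i hi =>
      (hy ⟨i, hi⟩).trans (hw ⟨i, hi⟩).symm
  have hcover : ∀ n, univ ⊆ ⋃ v, t n v := fun n x _ =>
    mem_iUnion.mpr ⟨fun i => x i, fun _ => rfl⟩
  have hsum : ∀ n, ∑ v, Metric.ediam (t n v) ^ (1 : ℝ) ≤ 1 := fun n => calc
    _ ≤ ∑ _v : Fin n → Bool, (2⁻¹ : ℝ≥0∞) ^ n :=
        Finset.sum_le_sum fun v _ => by simpa using hdiam n v
    _ = 1 := by simp [← mul_pow, ENNReal.mul_inv_cancel]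
  have hμH : μH[1] (univ : Set Sigma2) ≤ 1 :=
    (Measure.hausdorffMeasure_le_liminf_sum 1 univ (fun n => 2⁻¹ ^ n)
      (ENNReal.tendsto_pow_atTop_nhds_zero_of_lt_one (by norm_num)) t (.of_forall hdiam)
      (.of_forall hcover)).trans (liminf_le_of_frequently_le' (.of_forall hsum))
  have := dimH_le_of_hausdorffMeasure_ne_top (d := 1) (s := (univ : Set Sigma2))
    (ne_top_of_le_ne_top ENNReal.one_ne_top (by simpa using hμH))
  simpa using this

section Bernoulli

variable {ν : Measure Sigma2}
  (hcyl : ∀ u : List Bool, ν (cylinder u) = (1 / 2 : ℝ≥0∞) ^ u.length)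
include hcyl

lemma isProbabilityMeasure_of_measure_cylinder : IsProbabilityMeasure ν :=
  ⟨by simpa [_root_.cylinder] using hcyl []⟩

lemma map_restrict_eq_pi (n : ℕ) :
    ν.map (fun x (i : Fin n) => x i) = Measure.pi fun _ => uniformBool := by
  refine Measure.ext_of_singleton fun v => ?_
  rw [Measure.map_apply (by fun_prop) (measurableSet_singleton v), preimage_restrict_singleton,
    hcyl, ← Set.univ_pi_singleton, Measure.pi_pi]
  simp [uniformBool_singleton, one_div]

lemma measure_allTrue (s : Finset ℕ) : ν (allTrue s) = 2⁻¹ ^ s.card := by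
  set n := s.sup id + 1
  have hlt : ∀ i ∈ s, i < n := fun i hi => Nat.lt_succ_of_le (Finset.le_sup (f := id) hi)
  set box : Fin n → Set Bool := fun i => if (i : ℕ) ∈ s then {true} else univ
  have hbox : allTrue s = (fun (x : Sigma2) (i : Fin n) => x i) ⁻¹' Set.pi univ box := by
    ext x
    simp only [allTrue, box, mem_ofPred_eq, mem_preimage, mem_univ_pi]
    refine ⟨fun h i => ?_, fun h i hi => by simpa [hi] using h ⟨i, hlt i hi⟩⟩
    split_ifs with hi
    exacts [h i hi, trivial]
  have hmeas : MeasurableSet (Set.pi univ box) :=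
    .univ_pi fun i => by dsimp only [box]; split <;> simp
  rw [hbox, ← Measure.map_apply (by fun_prop) hmeas,
    map_restrict_eq_pi hcyl, Measure.pi_pi]
  have hfactor : ∀ i : Fin n, uniformBool (box i) = if (i : ℕ) ∈ s then 2⁻¹ else 1 := by
    intro i
    dsimp only [box]
    split_ifs
    exacts [uniformBool_singleton true, uniformBool_univ]
  rw [Finset.prod_congr rfl fun i _ => hfactor i,
    Fin.prod_univ_eq_prod_range (fun j => if j ∈ s then (2 : ℝ≥0∞)⁻¹ else 1) n,
    Finset.prod_ite_mem, Finset.inter_eq_right.mpr fun i hi => Finset.mem_range.mpr (hlt i hi),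
    Finset.prod_const]

lemma integral_indicator_allTrue (s : Finset ℕ) :
    ∫ x, (allTrue s).indicator (1 : Sigma2 → ℝ) x ∂ν = 2⁻¹ ^ s.card := by
  rw [integral_indicator_one (measurableSet_allTrue s), measureReal_def, measure_allTrue hcyl]
  simp

lemma integrable_indicator_allTrue (s : Finset ℕ) :
    Integrable ((allTrue s).indicator (1 : Sigma2 → ℝ)) ν :=
  have := isProbabilityMeasure_of_measure_cylinder hcyl
  (integrable_const 1).indicator (measurableSet_allTrue s)

lemma integral_corrSum (n : ℕ) : ∫ x, corrSum n x ∂ν = n / 4 := by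
  simp_rw [corrSum_eq_sum_indicator, Finset.sum_apply]
  rw [integral_finsetSum _ fun k _ => integrable_indicator_allTrue hcyl _]
  calc ∑ k ∈ Finset.Icc 1 n, ∫ x, (allTrue (digitPair k)).indicator 1 x ∂ν
      = ∑ k ∈ Finset.Icc 1 n, (1 / 4 : ℝ) := by
        refine Finset.sum_congr rfl fun k hk => ?_
        rw [integral_indicator_allTrue hcyl, card_digitPair (Finset.mem_Icc.mp hk).1]
        norm_num
    _ = n / 4 := by
        simp only [Finset.sum_const, Nat.card_Icc, add_tsub_cancel_right, nsmul_eq_mul]; ring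

lemma integral_corrSum_sq_le (n : ℕ) :
    ∫ x, corrSum n x ^ 2 ∂ν ≤ (n : ℝ) ^ 2 / 16 + 3 * n := by
  have hsq : ∀ x, corrSum n x ^ 2 = ∑ k ∈ Finset.Icc 1 n, ∑ j ∈ Finset.Icc 1 n,
      (allTrue (digitPair k ∪ digitPair j)).indicator 1 x := fun x => by
    simp only [sq, corrSum_eq_sum_indicator, Finset.sum_apply, Finset.sum_mul_sum, allTrue_union,
      inter_indicator_one, Pi.mul_apply]
  simp_rw [hsq]
  rw [integral_finsetSum _ fun k _ => integrable_finsetSum _ fun j _ =>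
    integrable_indicator_allTrue hcyl _]
  simp_rw [integral_finsetSum _ fun j _ => integrable_indicator_allTrue hcyl _,
    integral_indicator_allTrue hcyl]
  -- two digit pairs are disjoint, hence independent, unless `j ∈ {k, 2k, k/2}`
  have hterm : ∀ k ∈ Finset.Icc 1 n, ∀ j ∈ Finset.Icc 1 n,
      (2 : ℝ)⁻¹ ^ (digitPair k ∪ digitPair j).card
        ≤ 1 / 16 + if j = k ∨ j = 2 * k ∨ k = 2 * j then 1 else 0 := by
    intro k hk j hj
    split_ifs with hbad
    · linarith [pow_le_one₀ (M₀ := ℝ) (a := 2⁻¹) (by norm_num) (by norm_num)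
        (n := (digitPair k ∪ digitPair j).card)]
    · rw [card_digitPair_union (Finset.mem_Icc.mp hk).1 (Finset.mem_Icc.mp hj).1 hbad]
      norm_num
  calc _ ≤ ∑ k ∈ Finset.Icc 1 n, ∑ j ∈ Finset.Icc 1 n,
        (1 / 16 + if j = k ∨ j = 2 * k ∨ k = 2 * j then (1 : ℝ) else 0) :=
        Finset.sum_le_sum fun k hk => Finset.sum_le_sum fun j hj => hterm k hk j hj
    _ ≤ ∑ k ∈ Finset.Icc 1 n, (n / 16 + 3 : ℝ) := by
        refine Finset.sum_le_sum fun k _ => ?_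
        rw [Finset.sum_add_distrib, Finset.sum_boole]
        have := card_filter_overlapping_le k n
        simp only [Finset.sum_const, Nat.card_Icc, add_tsub_cancel_right, nsmul_eq_mul]
        gcongr
        · linarith
        · exact_mod_cast this
    _ = n ^ 2 / 16 + 3 * n := by
        simp only [Finset.sum_const, Nat.card_Icc, add_tsub_cancel_right, nsmul_eq_mul]; ring

lemma integral_corrSum_sub_sq_le (n : ℕ) :
    ∫ x, (corrSum n x - n / 4) ^ 2 ∂ν ≤ 3 * (n : ℝ) := by
  have := isProbabilityMeasure_of_measure_cylinder hcyl
  have hL2 : MemLp (corrSum n) 2 ν := memLp_corrSum n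
  calc ∫ x, (corrSum n x - n / 4) ^ 2 ∂ν = Var[corrSum n; ν] := by
        rw [variance_eq_integral hL2.aemeasurable, integral_corrSum hcyl]
    _ = ∫ x, corrSum n x ^ 2 ∂ν - (n / 4) ^ 2 := by
        rw [variance_eq_sub hL2, integral_corrSum hcyl]
        rfl
    _ ≤ 3 * n := by linarith [integral_corrSum_sq_le hcyl n]

lemma integral_corrSum_sub_div_sq_le (n : ℕ) :
    ∫ x, ((corrSum n x - n / 4) / n) ^ 2 ∂ν ≤ (3 : ℝ) / n := by
  rcases Nat.eq_zero_or_pos n with rfl | hn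
  · simp
  have hn' : (0 : ℝ) < n := by exact_mod_cast hn
  simp_rw [div_pow]
  rw [integral_div, div_le_div_iff₀ (by positivity) hn']
  nlinarith [integral_corrSum_sub_sq_le hcyl n]

lemma ae_tendsto_corrSum_sq_div :
    ∀ᵐ x ∂ν, Tendsto (fun m => corrSum (m ^ 2) x / (m ^ 2 : ℕ)) atTop (𝓝 (1 / 4)) := by
  have := isProbabilityMeasure_of_measure_cylinder hcyl
  have hint : ∀ m : ℕ, Integrable
      (fun x => ((corrSum (m ^ 2) x - (m ^ 2 : ℕ) / 4) / (m ^ 2 : ℕ)) ^ 2) ν := fun m => by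
    simp_rw [div_pow]
    exact ((memLp_corrSum _).sub (memLp_const _)).integrable_sq.div_const _
  have hsum : Summable fun m : ℕ => (3 : ℝ) / (m ^ 2 : ℕ) := by
    refine ((Real.summable_one_div_nat_pow.mpr one_lt_two).mul_left 3).congr fun m => ?_
    push_cast
    ring
  filter_upwards [ae_tendsto_zero_of_summable_integral_sq hint
    (hsum.of_nonneg_of_le (fun m => integral_nonneg fun x => sq_nonneg _)
      fun m => integral_corrSum_sub_div_sq_le hcyl _)] with x hx
  refine tendsto_sub_nhds_zero_iff.mp (hx.congr' ?_)
  filter_upwards [eventually_gt_atTop 0] with m hm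
  have : ((m ^ 2 : ℕ) : ℝ) ≠ 0 := by positivity
  field_simp

lemma ae_tendsto_corrSum_div :
    ∀ᵐ x ∂ν, Tendsto (fun n => corrSum n x / n) atTop (𝓝 (1 / 4)) := by
  filter_upwards [ae_tendsto_corrSum_sq_div hcyl] with x hx
  exact tendsto_div_of_monotone_of_tendsto_div_sq (monotone_corrSum x) hx

lemma measure_cylinder_piNat (z : Sigma2) (n : ℕ) : ν (PiNat.cylinder z n) = 2⁻¹ ^ n := by
  have : PiNat.cylinder z n =
      (fun (x : Sigma2) (i : Fin n) => x i) ⁻¹' {fun (i : Fin n) => z i} := by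
    ext x
    simp [PiNat.mem_cylinder_iff, funext_iff, Fin.forall_iff]
  rw [this, preimage_restrict_singleton, hcyl]
  simp

lemma measure_le_of_ediam_le {s : Set Sigma2} {n : ℕ} (hs : Metric.ediam s ≤ 2⁻¹ ^ n) :
    ν s ≤ 2⁻¹ ^ n := by
  rcases s.eq_empty_or_nonempty with rfl | ⟨z, hz⟩
  · simp
  rw [← measure_cylinder_piNat hcyl z n]
  exact measure_mono fun y hy =>
    mem_cylinder_iff_edist_le.mpr ((Metric.edist_le_ediam_of_mem hy hz).trans hs)

lemma half_measure_le_ediam {s : Set Sigma2} (hs : Metric.ediam s ≤ 1) :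
    2⁻¹ * ν s ≤ Metric.ediam s := by
  have hlim : Tendsto (fun n : ℕ => (2⁻¹ : ℝ≥0∞) ^ n) atTop (𝓝 0) :=
    ENNReal.tendsto_pow_atTop_nhds_zero_of_lt_one (by norm_num)
  rcases eq_or_ne (Metric.ediam s) 0 with h0 | h0
  · have : ν s = 0 := le_antisymm (ge_of_tendsto' hlim fun n =>
      measure_le_of_ediam_le hcyl (h0 ▸ zero_le)) zero_le
    simp [this]
  have hex : ∃ n, (2⁻¹ : ℝ≥0∞) ^ (n + 1) < Metric.ediam s :=
    ((hlim.comp (tendsto_add_atTop_nat 1)).eventually_lt_const (pos_iff_ne_zero.mpr h0)).exists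
  have hle : Metric.ediam s ≤ 2⁻¹ ^ Nat.find hex := by
    rcases h : Nat.find hex with _ | k
    · simpa using hs
    · exact not_lt.mp (Nat.find_min hex (h ▸ k.lt_succ_self))
  calc 2⁻¹ * ν s ≤ 2⁻¹ * 2⁻¹ ^ Nat.find hex := by
        gcongr
        exact measure_le_of_ediam_le hcyl hle
    _ = 2⁻¹ ^ (Nat.find hex + 1) := by rw [pow_succ']
    _ ≤ Metric.ediam s := (Nat.find_spec hex).le

lemma one_le_dimH_of_measure_ne_zero {A : Set Sigma2} (hA : ν A ≠ 0) : 1 ≤ dimH A := by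
  have hle : (2⁻¹ : ℝ≥0∞) • ν ≤ μH[1] :=
    Measure.le_hausdorffMeasure 1 _ 1 one_pos fun s hs => by
      simpa using half_measure_le_ediam hcyl hs
  have : μH[(1 : ℝ≥0)] A ≠ 0 :=
    ((ENNReal.mul_pos (ENNReal.inv_ne_zero.mpr ENNReal.ofNat_ne_top) hA).trans_le
      (by simpa using hle A)).ne'
  simpa using le_dimH_of_hausdorffMeasure_ne_zero this

end Bernoulli

end Sigma2

open Sigma2

theorem bernoulli_Aset_quarter_general (ν : Measure Sigma2)
    (hcyl : ∀ u : List Bool, ν (cylinder u) = (1 / 2 : ENNReal) ^ u.length) :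
    (∀ᵐ x ∂ν, Tendsto
        (fun n : ℕ => (∑ k ∈ Finset.Icc 1 n, xval x k * xval x (2 * k)) / (n : ℝ)) atTop
        (nhds (1 / 4))) ∧
      ν (Aset (1 / 4)) = 1 ∧ dimH (Aset (1 / 4)) = 1 := by
  have := isProbabilityMeasure_of_measure_cylinder hcyl
  have hae : ∀ᵐ x ∂ν, x ∈ Aset (1 / 4) := ae_tendsto_corrSum_div hcyl
  have hA : ν (Aset (1 / 4)) = 1 := by
    rw [measure_congr (ae_eq_univ (s := Aset (1 / 4)).mpr hae), measure_univ]
  refine ⟨hae, hA, le_antisymm ?_ ?_⟩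
  · exact (dimH_mono (subset_univ _)).trans dimH_univ_le_one
  · exact one_le_dimH_of_measure_ne_zero hcyl (by rw [hA]; exact one_ne_zero)

/-- For the Bernoulli `(1/2,1/2)` product measure `ν` on `Σ₂` (determined by
`ν[u] = (1/2)^{|u|}` on cylinders): for `ν`-a.e. `x`, `(1/n) ∑_{k≤n} x_k x_{2k} → 1/4`;
consequently `ν(A_{1/4}) = 1` and `dim_H(A_{1/4}) = 1`. -/
theorem bernoulli_Aset_quarter (ν : Measure Sigma2) (hν : IsProbabilityMeasure ν)
    (hcyl : ∀ u : List Bool, ν (cylinder u) = (1 / 2 : ENNReal) ^ u.length) :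
    (∀ᵐ x ∂ν, Tendsto
        (fun n : ℕ => (∑ k ∈ Finset.Icc 1 n, xval x k * xval x (2 * k)) / (n : ℝ)) atTop
        (nhds (1 / 4))) ∧
      ν (Aset (1 / 4)) = 1 ∧ dimH (Aset (1 / 4)) = 1 :=
  bernoulli_Aset_quarter_general ν hcyl
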